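/- arXiv:2402.10806 — 4 statements merged into one kernel-verified Lean document; each statement's English description precedes it below -/
import Mathlib

section
/- Let G be a graph on n vertices with girth strictly greater than 2t+1. Let x_1, …, x_n be an ordering of the vertices with x_1 = u, x_n = v, and d_H(u, x_{j−1}) ≤ d_H(u, x_j) for 2 ≤ j ≤ n−1, where H = G minus edge (u,v), and suppose (u,v) is an edge of G with (u,v) removed in H. Suppose S = {(x_{i_1},x_{j_1}),…,(x_{i_s},x_{j_s})} ⊆ E(H) is a set of edges with i_k < j_k, 1 = i_1 < i_2 < ⋯ < i_s, j_1 < ⋯ < j_s = n, and j_{k−1} ≥ i_k for all 2 ≤ k ≤ s. Then d_H(u, x_{j_k}) ≤ k for all 1 ≤ k ≤ s; in particular d_H(u,v) ≤ s, and hence s ≥ 2t+1. -/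
/-!
Along the ordering, `j ↦ d_H(u, x_j)` is nondecreasing, and crossing an edge of `H` raises the
distance from `u` by at most one. Since the left end of the `k`-th edge lies no further along the
ordering than the right end of the `(k-1)`-st, induction on `k` gives `d_H(u, x_{j_k}) ≤ k`.
A shortest `u`–`v` path in `H` avoids the edge `uv`, so closing it with that edge is a cycle of `G`
of length `d_H(u, v) + 1 ≤ s + 1`, and the girth bound forces `s ≥ 2t + 1`.
-/

namespace SimpleGraph

variable {V : Type*} {G : SimpleGraph V} {u v w : V}

variable (u) in
lemma Adj.dist_le_dist_add_one (h : G.Adj v w) : G.dist u w ≤ G.dist u v + 1 := by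
  simpa [dist_eq_one_iff_adj.mpr h] using h.reachable.dist_triangle_right u

lemma girth_le_dist_deleteEdges_add_one (huv : G.Adj u v)
    (hr : (G.deleteEdges {s(u, v)}).Reachable u v) :
    G.girth ≤ (G.deleteEdges {s(u, v)}).dist u v + 1 := by
  obtain ⟨p, hp, hlen⟩ := hr.exists_path_of_dist
  let q : G.Walk u v := p.mapLe (deleteEdges_le _)
  have hq : s(v, u) ∉ q.edges := fun h => by
    have := p.edges_subset_edgeSet (Walk.edges_mapLe_eq_edges _ _ ▸ h)
    simp [Sym2.eq_swap] at this
  have hcyc := (Walk.cons_isCycle_iff q huv.symm).mpr ⟨hp.mapLe _, hq⟩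
  simpa [q, hlen] using girth_le_length hcyc

end SimpleGraph

theorem le_index_of_overlapping_unit_steps {d ia ja : ℕ → ℕ} {N s : ℕ}
    (hd : MonotoneOn d (Set.Icc 1 N)) (hstart : d (ia 1) = 0)
    (hstep : ∀ k, 1 ≤ k → k ≤ s → d (ja k) ≤ d (ia k) + 1)
    (hia : ∀ k, 1 ≤ k → k ≤ s → 1 ≤ ia k) (hja : ∀ k, 1 ≤ k → k < s → ja k ≤ N)
    (hoverlap : ∀ k, 1 ≤ k → k < s → ia (k + 1) ≤ ja k) :
    ∀ k, 1 ≤ k → k ≤ s → d (ja k) ≤ k := by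
  intro k hk
  induction k, hk using Nat.le_induction with
  | base => intro hs; simpa [hstart] using hstep 1 le_rfl hs
  | succ k hk ih =>
    intro hks
    have hi := hia (k + 1) (by omega) hks
    have hov := hoverlap k hk hks
    have hj := hja k hk hks
    calc d (ja (k + 1)) ≤ d (ia (k + 1)) + 1 := hstep (k + 1) (by omega) hks
      _ ≤ d (ja k) + 1 := by gcongr; exact hd ⟨hi, hov.trans hj⟩ ⟨hi.trans hov, hj⟩ hov
      _ ≤ k + 1 := by gcongr; exact ih (by omega)

theorem stmt8_general {V : Type*} (G : SimpleGraph V) (t : ℕ)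
    (hg : ((2 * t + 1 : ℕ) : ℕ∞) < G.girth)
    (u v : V) (huv : G.Adj u v)
    (H : SimpleGraph V) (hH : H = G.deleteEdges {s(u, v)})
    (n : ℕ) (x : ℕ → V) (hx1 : x 1 = u) (hxn : x n = v)
    (hreach : ∀ j, 1 ≤ j → j ≤ n → H.Reachable u (x j))
    (hmono : ∀ j, 2 ≤ j → j ≤ n - 1 → H.dist u (x (j - 1)) ≤ H.dist u (x j))
    (s : ℕ) (hs : 1 ≤ s) (ia ja : ℕ → ℕ)
    (hrange : ∀ k, 1 ≤ k → k ≤ s → 1 ≤ ia k ∧ ja k ≤ n)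
    (hedge : ∀ k, 1 ≤ k → k ≤ s → H.Adj (x (ia k)) (x (ja k)))
    (hij : ∀ k, 1 ≤ k → k ≤ s → ia k < ja k)
    (hi1 : ia 1 = 1) (hjs : ja s = n)
    (hjmono : ∀ k, 2 ≤ k → k ≤ s → ja (k - 1) < ja k)
    (hoverlap : ∀ k, 2 ≤ k → k ≤ s → ia k ≤ ja (k - 1)) :
    (∀ k, 1 ≤ k → k ≤ s → H.dist u (x (ja k)) ≤ k) ∧
    H.dist u v ≤ s ∧ 2 * t + 1 ≤ s := by
  have hd : MonotoneOn (fun j => H.dist u (x j)) (Set.Icc 1 (n - 1)) :=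
    monotoneOn_of_le_add_one Set.ordConnected_Icc fun j _ hj hj1 => by
      simpa using hmono (j + 1) (by have := hj.1; omega) hj1.2
  have hchain := le_index_of_overlapping_unit_steps hd (by simp [hi1, hx1])
    (fun k hk hks => (hedge k hk hks).dist_le_dist_add_one u)
    (fun k hk hks => (hrange k hk hks).1)
    (fun k hk hks => by
      have hlt : ja k < ja (k + 1) := by simpa using hjmono (k + 1) (by omega) hks
      have := (hrange (k + 1) (by omega) hks).2
      omega)
    (fun k hk hks => by simpa using hoverlap (k + 1) (by omega) hks)
  have hdist : H.dist u v ≤ s := by simpa [hjs, hxn] using hchain s hs le_rfl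
  have hn1 : 1 ≤ n := by
    have := hij s hs le_rfl
    omega
  have hgirth : G.girth ≤ H.dist u v + 1 := by
    subst hH
    exact G.girth_le_dist_deleteEdges_add_one huv (hxn ▸ hreach n hn1 le_rfl)
  have hg' : 2 * t + 1 < G.girth := by exact_mod_cast hg
  exact ⟨hchain, hdist, by omega⟩

/-- Let G have girth > 2t+1 and edge (u,v); H = G − (u,v); x_1,…,x_n an
ordering of the vertices with x_1 = u, x_n = v, nondecreasing in H-distance from u.
If S = {(x_{i_k}, x_{j_k})} ⊆ E(H) satisfies i_k < j_k, 1 = i_1 < ⋯ < i_s,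
j_1 < ⋯ < j_s = n and j_{k−1} ≥ i_k, then d_H(u, x_{j_k}) ≤ k for all k; in particular
d_H(u,v) ≤ s and hence s ≥ 2t+1. -/
theorem stmt8 {V : Type*} [Fintype V] [DecidableEq V] (G : SimpleGraph V) (t : ℕ)
    (hg : ((2 * t + 1 : ℕ) : ℕ∞) < G.girth)
    (u v : V) (huv : G.Adj u v)
    (H : SimpleGraph V) (hH : H = G.deleteEdges {s(u, v)})
    (n : ℕ) (hn : n = Fintype.card V)
    (x : ℕ → V) (hbij : Set.BijOn x (Set.Icc 1 n) Set.univ)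
    (hx1 : x 1 = u) (hxn : x n = v)
    (hreach : ∀ j, 1 ≤ j → j ≤ n → H.Reachable u (x j))
    (hmono : ∀ j, 2 ≤ j → j ≤ n - 1 → H.dist u (x (j - 1)) ≤ H.dist u (x j))
    (s : ℕ) (hs : 1 ≤ s) (ia ja : ℕ → ℕ)
    (hrange : ∀ k, 1 ≤ k → k ≤ s → 1 ≤ ia k ∧ ja k ≤ n)
    (hedge : ∀ k, 1 ≤ k → k ≤ s → H.Adj (x (ia k)) (x (ja k)))
    (hij : ∀ k, 1 ≤ k → k ≤ s → ia k < ja k)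
    (hi1 : ia 1 = 1) (hjs : ja s = n)
    (himono : ∀ k, 2 ≤ k → k ≤ s → ia (k - 1) < ia k)
    (hjmono : ∀ k, 2 ≤ k → k ≤ s → ja (k - 1) < ja k)
    (hoverlap : ∀ k, 2 ≤ k → k ≤ s → ia k ≤ ja (k - 1)) :
    (∀ k, 1 ≤ k → k ≤ s → H.dist u (x (ja k)) ≤ k) ∧
    H.dist u v ≤ s ∧ 2 * t + 1 ≤ s :=
  stmt8_general G t hg u v huv H hH n x hx1 hxn hreach hmono s hs ia ja hrange hedge hij hi1 hjs
    hjmono hoverlap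
end

section
/- Let G be a graph with edge connectivity exactly k−1, and let H ⊆ G be a subgraph containing every edge that crosses some cut of G of size at most k (a k-connectivity certificate). Then a set of links L'' covers all minimum cuts (cuts of size k−1) of H if and only if it covers all minimum cuts of G; consequently, L'' augments H to edge connectivity k if and only if it augments G to edge connectivity k. -/
open Finset

/-- The edges of the edge set F crossing the cut (S, V∖S). -/
def cutEdges {V : Type*} [Fintype V] [DecidableEq V]
    (F : Finset (Sym2 V)) (S : Finset V) : Finset (Sym2 V) :=
  F.filter (fun e => ∃ x y : V, e = s(x, y) ∧ x ∈ S ∧ y ∉ S)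


lemma cutEdges_mono {V : Type*} [Fintype V] [DecidableEq V]
    {A B : Finset (Sym2 V)} (h : A ⊆ B) (S : Finset V) :
    cutEdges A S ⊆ cutEdges B S :=
  Finset.filter_subset_filter _ h

lemma cutEdges_union {V : Type*} [Fintype V] [DecidableEq V]
    (A B : Finset (Sym2 V)) (S : Finset V) :
    cutEdges (A ∪ B) S = cutEdges A S ∪ cutEdges B S :=
  Finset.filter_union _ _ _

/-- Let G = (V,E) have edge connectivity exactly k−1 and let H be a
k-connectivity certificate of G (H contains every edge crossing a cut of size ≤ k and
preserves all cut values up to k). Then a link set L'' covers all minimum cuts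
(cuts of size k−1) of H iff it covers all minimum cuts of G; consequently L''
augments H to edge connectivity k iff it augments G to edge connectivity k. -/
theorem stmt11 {V : Type*} [Fintype V] [DecidableEq V] (k : ℕ) (hk : 1 ≤ k)
    (E H L : Finset (Sym2 V)) (hHE : H ⊆ E)
    (hconn : ∀ S : Finset V, S.Nonempty → S ≠ Finset.univ →
      k - 1 ≤ (cutEdges E S).card)
    (hmincut : ∃ S : Finset V, S.Nonempty ∧ S ≠ Finset.univ ∧
      (cutEdges E S).card = k - 1)
    (hcert : ∀ S : Finset V, S.Nonempty → S ≠ Finset.univ →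
      (cutEdges E S).card ≤ k → cutEdges E S ⊆ H)
    (hcert2 : ∀ S : Finset V, S.Nonempty → S ≠ Finset.univ →
      min k (cutEdges E S).card ≤ (cutEdges H S).card) :
    ((∀ S : Finset V, S.Nonempty → S ≠ Finset.univ →
        (cutEdges H S).card = k - 1 → (cutEdges L S).Nonempty) ↔
      (∀ S : Finset V, S.Nonempty → S ≠ Finset.univ →
        (cutEdges E S).card = k - 1 → (cutEdges L S).Nonempty)) ∧
    ((∀ S : Finset V, S.Nonempty → S ≠ Finset.univ →
        k ≤ (cutEdges (H ∪ L) S).card) ↔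
      (∀ S : Finset V, S.Nonempty → S ≠ Finset.univ →
        k ≤ (cutEdges (E ∪ L) S).card)) := by
  -- key: if the E-cut is small, H-cut equals E-cut
  have key : ∀ S : Finset V, S.Nonempty → S ≠ Finset.univ →
      (cutEdges E S).card ≤ k → cutEdges H S = cutEdges E S := by
    intro S hS hS' hle
    apply Finset.Subset.antisymm (cutEdges_mono hHE S)
    intro e he
    have heH : e ∈ H := hcert S hS hS' hle he
    simp only [cutEdges, Finset.mem_filter] at he ⊢
    exact ⟨heH, he.2⟩
  -- H-mincut iff E-mincut
  have card_iff : ∀ S : Finset V, S.Nonempty → S ≠ Finset.univ →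
      ((cutEdges H S).card = k - 1 ↔ (cutEdges E S).card = k - 1) := by
    intro S hS hS'
    constructor
    · intro h
      have h2 := hcert2 S hS hS'
      rw [h] at h2
      have hEle : (cutEdges E S).card ≤ k - 1 := by
        rcases le_total k (cutEdges E S).card with h' | h'
        · rw [min_eq_left h'] at h2; omega
        · rw [min_eq_right h'] at h2; exact h2
      have := hconn S hS hS'
      omega
    · intro h
      rw [key S hS hS' (by omega), h]
  refine ⟨?_, ?_⟩
  · constructor
    · intro hH S hS hS' hE
      exact hH S hS hS' ((card_iff S hS hS').mpr hE)
    · intro hE S hS hS' hH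
      exact hE S hS hS' ((card_iff S hS hS').mp hH)
  · constructor
    · intro hH S hS hS'
      exact le_trans (hH S hS hS')
        (Finset.card_le_card (cutEdges_mono (Finset.union_subset_union_left hHE) S))
    · intro hE S hS hS'
      by_cases hc : (cutEdges E S).card ≤ k
      · have := key S hS hS' hc
        rw [cutEdges_union, this, ← cutEdges_union]
        exact hE S hS hS'
      · push_neg at hc
        have h2 := hcert2 S hS hS'
        rw [min_eq_left (le_of_lt hc)] at h2
        calc k ≤ (cutEdges H S).card := h2
          _ ≤ (cutEdges (H ∪ L) S).card := by
              rw [cutEdges_union]; exact Finset.card_le_card Finset.subset_union_left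
end

section
/- Let G be an n-vertex graph containing no cycle of length at most 2t. Then G has at most O(n^{1+1/t}) edges (the Moore bound): specifically |E(G)| ≤ n^{1+1/t} + n. -/
/-!
If `G` has more than `d * n` edges, peeling off vertices of degree at most `d` leaves a nonempty
set `s` in which every vertex has more than `d` neighbours. Grow paths inside `s` backwards from a
fixed `u ∈ s`: as the girth exceeds `2t`, the start of a path of length `< t` has at most one
neighbour on the path, so there are at least `d ^ t` paths of length `t`, and two of them with the
same start vertex would close a cycle of length at most `2t`. Hence `d ^ t ≤ n`, and
`d = ⌊n ^ (1 / t)⌋ + 1` gives `|E| ≤ d * n ≤ n ^ (1 + 1 / t) + n`.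
-/

open Finset

namespace SimpleGraph

variable {V : Type*} {G : SimpleGraph V}

lemma Walk.IsPath.eq_snd_of_adj_of_mem_support {u v w : V} {p : G.Walk v u} (hp : p.IsPath)
    (hgirth : (p.length + 1 : ℕ∞) < G.egirth) (hadj : G.Adj v w) (hw : w ∈ p.support) :
    w = p.snd := by
  classical
  have hedge : p.takeUntil w hw = .cons hadj .nil := by
    by_contra hne
    obtain ⟨_, _, _, c, hc, hlen⟩ :=
      (hp.takeUntil hw).exists_isCycle_length_le_add_of_ne (Path.singleton hadj).2 hne
    have := (egirth_le_length hc).trans (Nat.cast_le.2 (hlen.trans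
      (Nat.add_le_add_right (p.length_takeUntil_le_length hw) _)))
    exact (hgirth.trans_le this).false
  rw [← p.snd_takeUntil hadj.ne' hw, hedge]
  rfl

variable [DecidableEq V] [DecidableRel G.Adj]

lemma sum_card_filter_adj_le_sum_erase_add (s : Finset V) (a : V) :
    ∑ v ∈ s, #{w ∈ s | G.Adj v w} ≤
      ∑ v ∈ s.erase a, #{w ∈ s.erase a | G.Adj v w} + 2 * #{w ∈ s | G.Adj a w} := by
  have hpairs (t : Finset V) :
      ∑ v ∈ t, #{w ∈ t | G.Adj v w} = #{x ∈ t ×ˢ t | G.Adj x.1 x.2} := by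
    rw [card_filter, sum_product]
    simp only [card_filter]
  set N := {w ∈ s | G.Adj a w}
  have hsub : {x ∈ s ×ˢ s | G.Adj x.1 x.2} ⊆
      {x ∈ s.erase a ×ˢ s.erase a | G.Adj x.1 x.2} ∪ N.image (a, ·) ∪ N.image (·, a) := by
    rintro ⟨x, y⟩ hxy
    simp only [N, mem_filter, mem_product, mem_union, mem_image, mem_erase, Prod.mk.injEq] at hxy ⊢
    grind [G.adj_symm]
  rw [hpairs, hpairs, two_mul, ← add_assoc]
  refine (card_le_card hsub).trans <| (card_union_le _ _).trans ?_
  gcongr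
  · exact (card_union_le _ _).trans (by gcongr; exact card_image_le)
  · exact card_image_le

lemma exists_subset_nonempty_forall_lt_card_filter_adj (d : ℕ) (s : Finset V)
    (h : 2 * d * #s < ∑ v ∈ s, #{w ∈ s | G.Adj v w}) :
    ∃ t ⊆ s, t.Nonempty ∧ ∀ v ∈ t, d < #{w ∈ t | G.Adj v w} := by
  induction s using Finset.strongInduction with
  | H s ih =>
    by_cases! hlow : ∀ v ∈ s, d < #{w ∈ s | G.Adj v w}
    · refine ⟨s, subset_rfl, ?_, hlow⟩
      rw [nonempty_iff_ne_empty]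
      rintro rfl
      simp at h
    · obtain ⟨a, ha, hda⟩ := hlow
      have herase := G.sum_card_filter_adj_le_sum_erase_add s a
      have hcard := card_erase_add_one ha
      obtain ⟨t, hts, ht⟩ := ih (s.erase a) (erase_ssubset ha) (by rw [← hcard] at h; nlinarith)
      exact ⟨t, hts.trans (erase_subset a s), ht⟩

section PathCounting

variable (G) (s : Finset V) {u : V}

-- Paths are stored as walks ending at `u`, so that they grow at their start by `Walk.cons`.
def extendPath (x : Σ v, G.Walk v u) : Finset (Σ v, G.Walk v u) :=
  {w ∈ s | G.Adj x.1 w ∧ w ∉ x.2.support}.attach.image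
    fun w ↦ ⟨w.1, .cons (mem_filter.1 w.2).2.1.symm x.2⟩

def pathsWithin (u : V) : ℕ → Finset (Σ v, G.Walk v u)
  | 0 => {⟨u, .nil⟩}
  | k + 1 => (pathsWithin u k).biUnion (extendPath G s)

variable {G s}

lemma pathsWithin_spec (hu : u ∈ s) {k : ℕ} {x : Σ v, G.Walk v u}
    (hx : x ∈ G.pathsWithin s u k) :
    x.2.IsPath ∧ x.2.length = k ∧ ∀ y ∈ x.2.support, y ∈ s := by
  induction k generalizing x with
  | zero =>
    obtain rfl := mem_singleton.1 hx
    simpa using hu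
  | succ k ih =>
    simp only [pathsWithin, mem_biUnion, extendPath, mem_image, mem_attach, true_and] at hx
    obtain ⟨⟨v, p⟩, hp, ⟨w, hw⟩, rfl⟩ := hx
    obtain ⟨hpath, rfl, hsupp⟩ := ih hp
    obtain ⟨hws, -, hwp⟩ := mem_filter.1 hw
    refine ⟨hpath.cons hwp, rfl, ?_⟩
    simp only [Walk.support_cons, List.mem_cons, forall_eq_or_imp]
    exact ⟨hws, hsupp⟩

lemma eq_tail_of_mem_extendPath {x z : Σ v, G.Walk v u} (hz : z ∈ G.extendPath s x) :
    x = ⟨z.2.snd, z.2.tail⟩ := by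
  obtain ⟨w, -, rfl⟩ := mem_image.1 hz
  obtain ⟨v, p⟩ := x
  cases p <;> rfl

lemma le_card_extendPath {d : ℕ} {v : V} {p : G.Walk v u} (hp : p.IsPath)
    (hgirth : (p.length + 1 : ℕ∞) < G.egirth) (hdeg : d < #{w ∈ s | G.Adj v w}) :
    d ≤ #(G.extendPath s ⟨v, p⟩) := by
  have hcard : #(G.extendPath s ⟨v, p⟩) = #{w ∈ {w ∈ s | G.Adj v w} | w ∉ p.support} := by
    rw [extendPath, card_image_of_injective _ fun w₁ w₂ h ↦ Subtype.ext (congrArg Sigma.fst h),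
      card_attach, filter_filter]
  have honPath : #{w ∈ {w ∈ s | G.Adj v w} | w ∈ p.support} ≤ 1 := by
    refine card_le_one.2 fun w₁ h₁ w₂ h₂ ↦ ?_
    simp only [mem_filter] at h₁ h₂
    rw [hp.eq_snd_of_adj_of_mem_support hgirth h₁.1.2 h₁.2,
      hp.eq_snd_of_adj_of_mem_support hgirth h₂.1.2 h₂.2]
  have := card_filter_add_card_filter_not (s := {w ∈ s | G.Adj v w}) (· ∈ p.support)
  omega

lemma pow_le_card_pathsWithin {d : ℕ} (hu : u ∈ s) (hdeg : ∀ v ∈ s, d < #{w ∈ s | G.Adj v w})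
    {k : ℕ} (hk : (k : ℕ∞) < G.egirth) : d ^ k ≤ #(G.pathsWithin s u k) := by
  induction k with
  | zero => simp [pathsWithin]
  | succ k ih =>
    have hdisj : (G.pathsWithin s u k : Set (Σ v, G.Walk v u)).PairwiseDisjoint
        (G.extendPath s) := fun x _ y _ hxy ↦ Finset.disjoint_left.2 fun z hzx hzy ↦
      hxy ((eq_tail_of_mem_extendPath hzx).trans (eq_tail_of_mem_extendPath hzy).symm)
    rw [pathsWithin, card_biUnion hdisj, pow_succ]
    refine (Nat.mul_le_mul_right d (ih (lt_of_le_of_lt (by simp) hk))).trans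
      (card_nsmul_le_sum _ _ _ fun x hx ↦ ?_)
    obtain ⟨hpath, hlen, hsupp⟩ := pathsWithin_spec hu hx
    exact le_card_extendPath hpath (by rw [hlen]; exact_mod_cast hk)
      (hdeg _ (hsupp _ x.2.start_mem_support))

lemma card_pathsWithin_le_card [Fintype V] (hu : u ∈ s) {k : ℕ}
    (hk : (2 * k : ℕ∞) < G.egirth) : #(G.pathsWithin s u k) ≤ Fintype.card V := by
  rw [← card_univ]
  refine card_le_card_of_injOn Sigma.fst (fun _ _ ↦ mem_univ _)
    fun ⟨v, p⟩ hp ⟨v', q⟩ hq hvv' ↦ ?_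
  obtain rfl : v = v' := hvv'
  obtain ⟨hpath, hplen, -⟩ := pathsWithin_spec hu hp
  obtain ⟨hqpath, hqlen, -⟩ := pathsWithin_spec hu hq
  by_contra hne
  obtain ⟨_, _, _, c, hc, hclen⟩ :=
    hpath.exists_isCycle_length_le_add_of_ne hqpath fun h ↦ hne (congrArg _ h)
  have := (egirth_le_length hc).trans (Nat.cast_le.2 hclen)
  push_cast [hplen, hqlen, ← two_mul] at this
  exact (hk.trans_le this).false

end PathCounting

theorem pow_le_card_of_forall_lt_card_filter_adj [Fintype V] {s : Finset V} {d t : ℕ}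
    (hs : s.Nonempty) (hdeg : ∀ v ∈ s, d < #{w ∈ s | G.Adj v w})
    (ht : (2 * t : ℕ∞) < G.egirth) : d ^ t ≤ Fintype.card V := by
  obtain ⟨u, hu⟩ := hs
  have htt : (t : ℕ∞) ≤ 2 * t := by norm_cast; omega
  exact (pow_le_card_pathsWithin hu hdeg (htt.trans_lt ht)).trans (card_pathsWithin_le_card hu ht)

theorem card_edgeFinset_le_mul_of_card_lt_pow [Fintype V] {d t : ℕ}
    (ht : (2 * t : ℕ∞) < G.egirth) (hd : Fintype.card V < d ^ t) :
    #G.edgeFinset ≤ d * Fintype.card V := by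
  by_contra! hE
  have hsum : 2 * d * #(univ : Finset V) < ∑ v, #{w | G.Adj v w} := by
    simp_rw [← neighborFinset_eq_filter, card_neighborFinset_eq_degree,
      sum_degrees_eq_twice_card_edges, card_univ, mul_assoc]
    omega
  obtain ⟨s, -, hs, hdeg⟩ := G.exists_subset_nonempty_forall_lt_card_filter_adj d _ hsum
  exact (pow_le_card_of_forall_lt_card_filter_adj hs hdeg ht).not_gt hd

end SimpleGraph

lemma exists_nat_lt_pow_le_rpow_one_div_add_one (n : ℕ) {t : ℕ} (ht : t ≠ 0) :
    ∃ d : ℕ, n < d ^ t ∧ (d : ℝ) ≤ (n : ℝ) ^ (1 / (t : ℝ)) + 1 := by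
  set x := (n : ℝ) ^ (1 / (t : ℝ))
  have hx : 0 ≤ x := by positivity
  have hxt : x ^ t = n := by
    rw [← Real.rpow_natCast, ← Real.rpow_mul n.cast_nonneg, one_div_mul_cancel (by positivity),
      Real.rpow_one]
  refine ⟨⌊x⌋₊ + 1, ?_, by push_cast; linarith [Nat.floor_le hx]⟩
  have : (n : ℝ) < ((⌊x⌋₊ + 1 : ℕ) : ℝ) ^ t := by
    push_cast
    exact hxt ▸ pow_lt_pow_left₀ (Nat.lt_floor_add_one x) hx ht
  exact_mod_cast this

/-- Moore bound: A graph on n vertices with no cycle of length ≤ 2t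
(girth > 2t) has at most n^{1+1/t} + n edges. -/
theorem stmt15 {V : Type*} [Fintype V] [DecidableEq V]
    (G : SimpleGraph V) [DecidableRel G.Adj] (t : ℕ) (ht : 1 ≤ t)
    (hg : ((2 * t : ℕ) : ℕ∞) < G.girth) :
    (G.edgeFinset.card : ℝ) ≤
      (Fintype.card V : ℝ) ^ ((1 : ℝ) + 1 / (t : ℝ)) + (Fintype.card V : ℝ) := by
  set n := Fintype.card V
  have hgirth : (2 * t : ℕ∞) < G.egirth := by
    exact_mod_cast hg.trans_le G.egirth.natCast_toNat_le_self
  obtain ⟨d, hnd, hd⟩ := exists_nat_lt_pow_le_rpow_one_div_add_one n (Nat.one_le_iff_ne_zero.1 ht)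
  calc (#G.edgeFinset : ℝ) ≤ d * n := by
        exact_mod_cast G.card_edgeFinset_le_mul_of_card_lt_pow hgirth hnd
    _ ≤ ((n : ℝ) ^ (1 / (t : ℝ)) + 1) * n := by gcongr
    _ = (n : ℝ) ^ ((1 : ℝ) + 1 / (t : ℝ)) + n := by
      rw [Real.rpow_one_add' n.cast_nonneg (by positivity)]
      ring
end

section
/- Let H* be a k-edge-connected subgraph of a weighted graph G, and let H_{ℓ−1} be an (ℓ−1)-edge-connected subgraph of G for some 1 ≤ ℓ ≤ k. Define x_ℓ(e) = 1/(k−ℓ+1) for e ∈ E(H*) ∖ E(H_{ℓ−1}) and x_ℓ(e) = 0 for other edges of G ∖ H_{ℓ−1}. Then x_ℓ is a feasible fractional solution to the augmentation LP: for every S ⊂ V with |δ_{H_{ℓ−1}}(S)| ≤ ℓ−1, it holds that Σ_{e ∈ δ_{G∖H_{ℓ−1}}(S)} x_ℓ(e) ≥ ℓ − |δ_{H_{ℓ−1}}(S)|, and the cost of x_ℓ is at most w(H*)/(k−ℓ+1). -/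
open Finset

/-- Let H* ⊆ G be k-edge-connected and H_{ℓ−1} ⊆ G be (ℓ−1)-edge-connected,
1 ≤ ℓ ≤ k. Put x(e) = 1/(k−ℓ+1) on E(H*) ∖ E(H_{ℓ−1}) and 0 elsewhere. Then
0 ≤ x ≤ 1, x is feasible for the augmentation LP (each deficient cut S with
|δ_{H_{ℓ−1}}(S)| ≤ ℓ−1 receives fractional coverage ≥ ℓ − |δ_{H_{ℓ−1}}(S)|), and
the cost of x is at most w(H*)/(k−ℓ+1). -/
theorem stmt17 {V : Type*} [Fintype V] [DecidableEq V]
    (E Hstar Hprev : Finset (Sym2 V)) (hstarE : Hstar ⊆ E) (hprevE : Hprev ⊆ E)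
    (w : Sym2 V → ℝ) (hw : ∀ e, 0 ≤ w e)
    (k ℓ : ℕ) (hℓ1 : 1 ≤ ℓ) (hℓk : ℓ ≤ k)
    (hstar : ∀ S : Finset V, S.Nonempty → S ≠ Finset.univ →
      k ≤ (cutEdges Hstar S).card)
    (hprev : ∀ S : Finset V, S.Nonempty → S ≠ Finset.univ →
      ℓ - 1 ≤ (cutEdges Hprev S).card)
    (x : Sym2 V → ℝ)
    (hx : ∀ e, x e = if e ∈ Hstar \ Hprev then 1 / ((k - ℓ + 1 : ℕ) : ℝ) else 0) :
    (∀ e, 0 ≤ x e ∧ x e ≤ 1) ∧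
    (∀ S : Finset V, S.Nonempty → S ≠ Finset.univ →
      (cutEdges Hprev S).card ≤ ℓ - 1 →
      (ℓ : ℝ) - ((cutEdges Hprev S).card : ℝ) ≤ ∑ e ∈ cutEdges (E \ Hprev) S, x e) ∧
    (∑ e ∈ E \ Hprev, x e * w e ≤ (∑ e ∈ Hstar, w e) / ((k - ℓ + 1 : ℕ) : ℝ)) := by
  have hcpos : (0 : ℝ) < ((k - ℓ + 1 : ℕ) : ℝ) := by
    exact_mod_cast Nat.succ_pos (k - ℓ)
  have hc1 : (1 : ℝ) ≤ ((k - ℓ + 1 : ℕ) : ℝ) := by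
    exact_mod_cast Nat.succ_le_succ (Nat.zero_le _)
  have hxnn : ∀ e, 0 ≤ x e := by
    intro e; rw [hx e]; split
    · positivity
    · exact le_refl 0
  refine ⟨?_, ?_, ?_⟩
  · intro e
    refine ⟨hxnn e, ?_⟩
    rw [hx e]; split
    · rw [div_le_one hcpos]; exact hc1
    · norm_num
  · intro S hS hSu hdef
    have hpeq : (cutEdges Hprev S).card = ℓ - 1 := le_antisymm hdef (hprev S hS hSu)
    have hsub : cutEdges (Hstar \ Hprev) S ⊆ cutEdges (E \ Hprev) S :=
      Finset.filter_subset_filter _ (Finset.sdiff_subset_sdiff hstarE le_rfl)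
    have hsdiff : cutEdges (Hstar \ Hprev) S = cutEdges Hstar S \ cutEdges Hprev S := by
      ext e
      simp only [cutEdges, Finset.mem_filter, Finset.mem_sdiff, not_and]
      constructor
      · rintro ⟨⟨h1, h2⟩, h3⟩
        exact ⟨⟨h1, h3⟩, fun h4 => absurd h4 h2⟩
      · rintro ⟨⟨h1, h3⟩, h2⟩
        exact ⟨⟨h1, fun hB => h2 hB h3⟩, h3⟩
    have hcard : (k - ℓ + 1 : ℕ) ≤ (cutEdges (Hstar \ Hprev) S).card := by
      rw [hsdiff]
      have h1 := Finset.le_card_sdiff (cutEdges Hprev S) (cutEdges Hstar S)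
      have h2 := hstar S hS hSu
      omega
    have hsum : ∑ e ∈ cutEdges (Hstar \ Hprev) S, x e
        = ((cutEdges (Hstar \ Hprev) S).card : ℝ) / ((k - ℓ + 1 : ℕ) : ℝ) := by
      rw [Finset.sum_congr rfl (fun e he => ?_), Finset.sum_const, nsmul_eq_mul,
        mul_one_div]
      rw [hx e, if_pos (Finset.mem_filter.mp he).1]
    have hle : ∑ e ∈ cutEdges (Hstar \ Hprev) S, x e
        ≤ ∑ e ∈ cutEdges (E \ Hprev) S, x e :=
      Finset.sum_le_sum_of_subset_of_nonneg hsub (fun e _ _ => hxnn e)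
    have h1le : (1 : ℝ) ≤ ∑ e ∈ cutEdges (Hstar \ Hprev) S, x e := by
      rw [hsum, le_div_iff₀ hcpos, one_mul]
      exact_mod_cast hcard
    have hgoal : (ℓ : ℝ) - ((cutEdges Hprev S).card : ℝ) = 1 := by
      rw [hpeq, Nat.cast_sub hℓ1]; ring
    rw [hgoal]
    exact le_trans h1le hle
  · have hsub : Hstar \ Hprev ⊆ E \ Hprev := Finset.sdiff_subset_sdiff hstarE le_rfl
    have heq : ∑ e ∈ Hstar \ Hprev, x e * w e = ∑ e ∈ E \ Hprev, x e * w e := by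
      apply Finset.sum_subset hsub
      intro e _ he
      rw [hx e, if_neg he, zero_mul]
    rw [← heq]
    have heq2 : ∑ e ∈ Hstar \ Hprev, x e * w e
        = (∑ e ∈ Hstar \ Hprev, w e) / ((k - ℓ + 1 : ℕ) : ℝ) := by
      rw [Finset.sum_div]
      refine Finset.sum_congr rfl (fun e he => ?_)
      rw [hx e, if_pos he, one_div, inv_mul_eq_div]
    rw [heq2]
    rw [div_le_div_iff_of_pos_right hcpos]
    exact Finset.sum_le_sum_of_subset_of_nonneg Finset.sdiff_subset (fun i _ _ => hw i)
end
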